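/- arXiv:0710.2134 — 3 statements merged into one kernel-verified Lean document; each statement's English description precedes it below -/
import Mathlib

section
/- Let n > 1 be odd and j ≥ 1 even with gcd(j, n) = 1, and define φ_j^(n)(k) = |D(jk, 2n)| with D(p, 2n) the representative of p mod 2n in [−n, n). Then k ↦ φ_j^(n)(k) is a bijection from {1, …, (n−1)/2} onto the set of even numbers {2m : 1 ≤ m ≤ (n−1)/2}, and also a bijection from {(n+1)/2, …, n−1} onto the same set. -/
/-- `phi n j k = |D (j k, 2n)|`, where `D (p, 2n)` is the representative of
`p` mod `2n` lying in `[-n, n)`. -/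
def phi (n j : ℕ) (k : ℤ) : ℤ := |((j : ℤ) * k + (n : ℤ)) % (2 * (n : ℤ)) - (n : ℤ)|

/-!
Up to sign, `D (p, 2n)` is the least absolute residue `ZMod.valMinAbs` of `p` modulo `2n`, so
`φ(k₁) = φ(k₂)` exactly when `j k₁ ≡ ± j k₂ (mod 2n)`; as `j` is prime to `n` this forces
`k₁ ≡ ± k₂ (mod n)`, which is impossible for distinct `k₁, k₂ ∈ {1, …, (n-1)/2}`. Since `j` is
even and `n` odd, the residue of `j k` is even, nonzero when `n ∤ k`, and at most `n` in absolute
value, so `φ` maps `{1, …, (n-1)/2}` injectively into `{2, 4, …, n-1}`, a set of the same size.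
Finally `j n ≡ 0 (mod 2n)` gives `φ(n - k) = φ(k)`, which carries the bijection over to the upper
half `{(n+1)/2, …, n-1}`.
-/

open Set

theorem Set.MapsTo.bijOn_of_injOn_of_ncard_le {α β : Type*} {f : α → β} {s : Set α}
    {t : Set β} (hf : MapsTo f s t) (hinj : InjOn f s) (ht : t.Finite)
    (hcard : t.ncard ≤ s.ncard) : BijOn f s t :=
  ⟨hf, hinj,
    (eq_of_subset_of_ncard_le hf.image_subset (hcard.trans_eq hinj.ncard_image.symm) ht).ge⟩

theorem abs_add_emod_sub_eq_abs_valMinAbs (n : ℕ) (p : ℤ) :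
    |(p + n) % (2 * n) - n| = |(p : ZMod (2 * n)).valMinAbs| := by
  rcases Nat.eq_zero_or_pos n with rfl | hn
  · simp; rfl
  have : NeZero (2 * n) := ⟨by omega⟩
  set r := (p + n) % (2 * n) - n with hr
  have hr_cast : (p : ZMod (2 * n)) = r := by
    rw [ZMod.intCast_eq_intCast_iff_dvd_sub]
    exact ⟨-((p + n) / (2 * n)), by rw [hr, Int.emod_def]; push_cast; ring⟩
  have h0 : 0 ≤ (p + n) % (2 * n) := Int.emod_nonneg _ (by omega)
  have h1 : (p + n) % (2 * n) < 2 * n := Int.emod_lt_of_pos _ (by omega)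
  rcases eq_or_ne r (-n) with hrn | hrn
  · -- `valMinAbs` takes values in `(-n, n]`, so the representative `-n` becomes `n`
    have hneg : (p : ZMod (2 * n)) = (n : ℤ) := by
      rw [hr_cast, hrn, ZMod.intCast_eq_intCast_iff_dvd_sub]
      exact ⟨1, by push_cast; ring⟩
    rw [(ZMod.valMinAbs_spec _ n).2 ⟨hneg, by push_cast; constructor <;> omega⟩, hrn, abs_neg]
  · rw [(ZMod.valMinAbs_spec _ r).2 ⟨hr_cast, by push_cast; constructor <;> omega⟩]

theorem phi_eq_abs_valMinAbs (n j : ℕ) (k : ℤ) :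
    phi n j k = |((j * k : ℤ) : ZMod (2 * n)).valMinAbs| :=
  abs_add_emod_sub_eq_abs_valMinAbs n _

theorem phi_eq_phi_iff (n j : ℕ) (k₁ k₂ : ℤ) :
    phi n j k₁ = phi n j k₂ ↔ 2 * (n : ℤ) ∣ j * (k₁ - k₂) ∨ 2 * (n : ℤ) ∣ j * (k₁ + k₂) := by
  rw [phi_eq_abs_valMinAbs, phi_eq_abs_valMinAbs, ZMod.abs_valMinAbs_eq_abs_valMinAbs,
    ← Int.cast_neg, ZMod.intCast_eq_intCast_iff_dvd_sub, ZMod.intCast_eq_intCast_iff_dvd_sub,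
    ← dvd_neg, ← dvd_neg (b := _ - _)]
  push_cast
  ring_nf

theorem dvd_of_two_mul_dvd_mul {n j : ℕ} (hcop : j.Coprime n) {a : ℤ}
    (h : 2 * (n : ℤ) ∣ j * a) : (n : ℤ) ∣ a :=
  (Nat.isCoprime_iff_coprime.2 hcop.symm).dvd_of_dvd_mul_left (dvd_of_mul_left_dvd h)

theorem dvd_sub_or_dvd_add_of_phi_eq {n j : ℕ} (hcop : j.Coprime n) {k₁ k₂ : ℤ}
    (h : phi n j k₁ = phi n j k₂) : (n : ℤ) ∣ k₁ - k₂ ∨ (n : ℤ) ∣ k₁ + k₂ :=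
  ((phi_eq_phi_iff n j k₁ k₂).1 h).imp (dvd_of_two_mul_dvd_mul hcop)
    (dvd_of_two_mul_dvd_mul hcop)

theorem phi_natCast_sub {n j : ℕ} (hj : Even j) (k : ℤ) : phi n j (n - k) = phi n j k := by
  obtain ⟨c, rfl⟩ := hj
  refine (phi_eq_phi_iff n _ _ _).2 (Or.inr ⟨c, ?_⟩)
  push_cast
  ring

theorem phi_injOn_Icc {n j : ℕ} (hcop : j.Coprime n) :
    InjOn (phi n j) (Icc 1 (((n : ℤ) - 1) / 2)) := by
  intro k₁ ⟨hk₁, hk₁'⟩ k₂ ⟨hk₂, hk₂'⟩ h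
  rcases dvd_sub_or_dvd_add_of_phi_eq hcop h with hsub | hadd
  · have := Int.eq_zero_of_abs_lt_dvd hsub (by rw [abs_lt]; omega)
    omega
  · have := Int.eq_zero_of_abs_lt_dvd hadd (by rw [abs_lt]; omega)
    omega

theorem phi_mem_image_Icc {n j : ℕ} (hn : Odd n) (hj : Even j) (hcop : j.Coprime n) {k : ℤ}
    (hk : ¬ (n : ℤ) ∣ k) : phi n j k ∈ (2 * ·) '' Icc 1 (((n : ℤ) - 1) / 2) := by
  have : NeZero (2 * n) := ⟨by grind⟩
  rw [phi_eq_abs_valMinAbs]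
  set v := ((j * k : ℤ) : ZMod (2 * n)).valMinAbs
  have hle : |v| ≤ n := by
    rw [Int.abs_eq_natAbs]
    exact_mod_cast (ZMod.natAbs_valMinAbs_le _).trans (by omega)
  have hne : v ≠ 0 := by
    rw [Ne, ZMod.valMinAbs_eq_zero, ZMod.intCast_zmod_eq_zero_iff_dvd]
    exact fun h => hk (dvd_of_two_mul_dvd_mul hcop (by exact_mod_cast h))
  have hv_even : 2 ∣ v := by
    have h2n : ((2 * n : ℕ) : ℤ) ∣ j * k - v :=
      (ZMod.intCast_eq_intCast_iff_dvd_sub _ _ _).1 (ZMod.coe_valMinAbs _)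
    have hjk : (2 : ℤ) ∣ j * k := (hj.natCast (α := ℤ)).two_dvd.mul_right k
    exact (dvd_sub_right hjk).1 (dvd_trans ⟨n, by push_cast; ring⟩ h2n)
  obtain ⟨a, ha⟩ := hn
  clear_value v
  refine ⟨|v| / 2, ⟨?_, ?_⟩, ?_⟩ <;> rcases abs_cases v with ⟨h, hv⟩ | ⟨h, hv⟩ <;>
    simp only [h] at hle ⊢ <;> omega

theorem phi_bijOn_of_even_general (n j : ℕ) (hodd : Odd n)
    (heven : Even j) (hcop : Nat.gcd j n = 1) :
    Set.BijOn (phi n j) (Set.Icc (1 : ℤ) (((n : ℤ) - 1) / 2))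
      {y : ℤ | ∃ m : ℤ, 1 ≤ m ∧ m ≤ ((n : ℤ) - 1) / 2 ∧ y = 2 * m} ∧
    Set.BijOn (phi n j) (Set.Icc (((n : ℤ) + 1) / 2) ((n : ℤ) - 1))
      {y : ℤ | ∃ m : ℤ, 1 ≤ m ∧ m ≤ ((n : ℤ) - 1) / 2 ∧ y = 2 * m} := by
  have hT : {y : ℤ | ∃ m : ℤ, 1 ≤ m ∧ m ≤ ((n : ℤ) - 1) / 2 ∧ y = 2 * m} =
      (2 * ·) '' Icc 1 (((n : ℤ) - 1) / 2) := by
    ext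
    simp [eq_comm, and_assoc]
  have hlow : BijOn (phi n j) (Icc 1 (((n : ℤ) - 1) / 2))
      ((2 * ·) '' Icc 1 (((n : ℤ) - 1) / 2)) :=
    MapsTo.bijOn_of_injOn_of_ncard_le
      (fun k ⟨hk, hk'⟩ => phi_mem_image_Icc hodd heven hcop fun hdvd => by
        have := Int.le_of_dvd (by omega) hdvd
        omega)
      (phi_injOn_Icc hcop) ((finite_Icc _ _).image _) (ncard_image_le (finite_Icc _ _))
  have hreflect : BijOn ((n : ℤ) - ·) (Icc (((n : ℤ) + 1) / 2) ((n : ℤ) - 1))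
      (Icc 1 (((n : ℤ) - 1) / 2)) := by
    convert sub_right_injective.injOn.bijOn_image using 1
    rw [image_const_sub_Icc]
    obtain ⟨a, rfl⟩ := hodd
    congr 1 <;> push_cast <;> omega
  rw [hT]
  exact ⟨hlow, (hlow.comp hreflect).congr fun k _ => phi_natCast_sub heven k⟩

theorem phi_bijOn_of_even (n j : ℕ) (hn : 1 < n) (hodd : Odd n) (hj : 1 ≤ j)
    (heven : Even j) (hcop : Nat.gcd j n = 1) :
    Set.BijOn (phi n j) (Set.Icc (1 : ℤ) (((n : ℤ) - 1) / 2))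
      {y : ℤ | ∃ m : ℤ, 1 ≤ m ∧ m ≤ ((n : ℤ) - 1) / 2 ∧ y = 2 * m} ∧
    Set.BijOn (phi n j) (Set.Icc (((n : ℤ) + 1) / 2) ((n : ℤ) - 1))
      {y : ℤ | ∃ m : ℤ, 1 ≤ m ∧ m ≤ ((n : ℤ) - 1) / 2 ∧ y = 2 * m} :=
  phi_bijOn_of_even_general n j hodd heven hcop
end

section
/- Let n, j ≥ 1 with gcd(j, 2n) = d < n, and define φ_j^(n)(k) = |D(jk, 2n)| with D(p, 2n) the representative of p mod 2n in [−n, n). Then for each m ∈ {1, …, n/d − 1}, the number of k ∈ {1, …, n−1} with φ_j^(n)(k) = dm equals d; moreover the image φ_j^(n)({1, …, n−1}) \ {0, n} equals {dm : 1 ≤ m ≤ n/d − 1}. -/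
open Finset Pointwise

theorem Int.card_filter_Ico_add_mul_modEq (s v : ℤ) {M : ℤ} (hM : 0 < M) (L : ℕ) :
    #{k ∈ Ico s (s + L * M) | k ≡ v [ZMOD M]} = L := by
  have hM' : (M : ℚ) ≠ 0 := by exact_mod_cast hM.ne'
  have hshift : ((s + L * M - v : ℤ) : ℚ) / M = ((s - v : ℤ) : ℚ) / M + L := by
    push_cast
    field_simp
    ring
  have h := Int.Ico_filter_modEq_card s (s + L * M) hM v
  rw [← Int.cast_sub, ← Int.cast_sub, hshift, Int.ceil_add_natCast, add_sub_cancel_left,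
    max_eq_left (Int.natCast_nonneg L)] at h
  exact_mod_cast h

theorem Int.exists_mul_modEq_iff_modEq_div_gcd {N j c : ℤ} (hN : 0 < N)
    (hc : (Int.gcd j N : ℤ) ∣ c) :
    ∃ k₀, ∀ k, j * k ≡ c [ZMOD N] ↔ k ≡ k₀ [ZMOD N / Int.gcd j N] := by
  obtain ⟨t, rfl⟩ := hc
  refine ⟨Int.gcdA j N * t, fun k => ?_⟩
  have hsol : j * (Int.gcdA j N * t) ≡ Int.gcd j N * t [ZMOD N] := by
    rw [Int.gcd_eq_gcd_ab, Int.modEq_iff_dvd]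
    exact ⟨Int.gcdB j N * t, by ring⟩
  constructor
  · intro h
    rw [Int.gcd_comm]
    exact Int.ModEq.cancel_left_div_gcd hN (h.trans hsol.symm)
  · intro h
    refine Int.ModEq.trans ?_ hsol
    refine (h.mul_left' (c := j)).of_dvd ⟨j / Int.gcd j N, ?_⟩
    rw [← Int.mul_ediv_assoc j (Int.gcd_dvd_right j N), mul_comm j N,
      Int.mul_ediv_assoc N (Int.gcd_dvd_left j N)]

theorem Int.card_filter_Ico_mul_modEq_eq_gcd (s : ℤ) {N j c : ℤ} (hN : 0 < N)
    (hc : (Int.gcd j N : ℤ) ∣ c) :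
    #{k ∈ Ico s (s + N) | j * k ≡ c [ZMOD N]} = Int.gcd j N := by
  obtain ⟨k₀, hk₀⟩ := Int.exists_mul_modEq_iff_modEq_div_gcd hN hc
  have hg : (Int.gcd j N : ℤ) ∣ N := Int.gcd_dvd_right j N
  have hpos : 0 < N / Int.gcd j N := Int.ediv_pos_of_pos_of_dvd hN (by positivity) hg
  rw [filter_congr fun k _ => hk₀ k,
    show s + N = s + (Int.gcd j N : ℕ) * (N / Int.gcd j N) by rw [Int.mul_ediv_cancel' hg]]
  exact Int.card_filter_Ico_add_mul_modEq s k₀ hpos _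

section phi

variable {n j : ℕ}

theorem exists_phi_eq_abs (hn : 0 < n) (k : ℤ) :
    ∃ r : ℤ, phi n j k = |r| ∧ r ≡ j * k [ZMOD 2 * n] ∧ -n ≤ r ∧ r < n := by
  refine ⟨(j * k + n) % (2 * n) - n, rfl, ?_, ?_, ?_⟩
  · simpa using (Int.mod_modEq (j * k + n) (2 * n)).sub_right (n : ℤ)
  · linarith [Int.emod_nonneg (j * k + n : ℤ) (by omega : (2 * n : ℤ) ≠ 0)]
  · linarith [Int.emod_lt_of_pos (j * k + n : ℤ) (by omega : (0 : ℤ) < 2 * n)]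

theorem phi_nonneg (k : ℤ) : 0 ≤ phi n j k := abs_nonneg _

theorem phi_le (hn : 0 < n) (k : ℤ) : phi n j k ≤ n := by
  obtain ⟨r, hphi, -, hlo, hhi⟩ := exists_phi_eq_abs (j := j) hn k
  rw [hphi, abs_le]
  omega

theorem natCast_dvd_phi {d : ℕ} (hn : 0 < n) (hdj : d ∣ j) (hdn : d ∣ 2 * n) (k : ℤ) :
    (d : ℤ) ∣ phi n j k := by
  obtain ⟨r, hphi, hr, -⟩ := exists_phi_eq_abs (j := j) hn k
  rw [hphi, dvd_abs]
  exact ((hr.of_dvd (by exact_mod_cast hdn)).dvd_iff).2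
    (dvd_mul_of_dvd_left (by exact_mod_cast hdj) k)

theorem phi_eq_iff (hn : 0 < n) {e : ℤ} (he : 0 ≤ e) (hen : e < n) (k : ℤ) :
    phi n j k = e ↔ j * k ≡ e [ZMOD 2 * n] ∨ j * k ≡ -e [ZMOD 2 * n] := by
  obtain ⟨r, hphi, hr, hlo, hhi⟩ := exists_phi_eq_abs (j := j) hn k
  have hunique : ∀ x : ℤ, -n < x → x < n → (r = x ↔ j * k ≡ x [ZMOD 2 * n]) := by
    refine fun x hx₁ hx₂ => ⟨fun h => h ▸ hr.symm, fun h => ?_⟩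
    have := Int.eq_zero_of_abs_lt_dvd (hr.trans h).dvd (abs_sub_lt_iff.2 ⟨by omega, by omega⟩)
    omega
  rw [hphi, abs_eq he, hunique e (by omega) hen, hunique (-e) (by omega) (by omega)]

theorem phi_neg (hn : 0 < n) (k : ℤ) : phi n j (-k) = phi n j k := by
  have hsymm : ∀ k, phi n j k < n → phi n j (-k) = phi n j k := by
    intro k hk
    rw [phi_eq_iff hn (phi_nonneg k) hk, mul_neg, or_comm]
    exact ((phi_eq_iff hn (phi_nonneg k) hk k).1 rfl).imp Int.ModEq.neg
      fun h => by simpa using h.neg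
  rcases (phi_le hn k).lt_or_eq with hk | hk
  · exact hsymm k hk
  rcases (phi_le hn (-k)).lt_or_eq with hk' | hk'
  · simpa using (hsymm (-k) hk').symm
  · rw [hk, hk']

theorem phi_ne_of_dvd (hn : 0 < n) {e : ℤ} (he : 0 < e) (hen : e < n) {k : ℤ}
    (hk : (n : ℤ) ∣ k) : phi n j k ≠ e := by
  intro h
  have hjk : (n : ℤ) ∣ j * k := dvd_mul_of_dvd_right hk _
  have hne : (n : ℤ) ∣ e := by
    rcases (phi_eq_iff hn he.le hen k).1 h with h | h
    · exact ((h.of_mul_left 2).dvd_iff).1 hjk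
    · exact dvd_neg.1 (((h.of_mul_left 2).dvd_iff).1 hjk)
  exact he.ne' (Int.eq_zero_of_dvd_of_nonneg_of_lt he.le hen hne)

theorem card_filter_phi_eq (hn : 0 < n) {e : ℤ} (he : 0 < e) (hen : e < n)
    (hde : (Nat.gcd j (2 * n) : ℤ) ∣ e) :
    #{k ∈ Icc 1 ((n : ℤ) - 1) | phi n j k = e} = Nat.gcd j (2 * n) := by
  set S := {k ∈ Icc 1 ((n : ℤ) - 1) | phi n j k = e}
  set W := Ico (1 - n : ℤ) (1 - n + 2 * n)
  have hgcd : Int.gcd (j : ℤ) (2 * n) = Nat.gcd j (2 * n) := by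
    rw [← Int.gcd_natCast_natCast]
    push_cast
    rfl
  have hsym : {k ∈ W | phi n j k = e} = -S ∪ S := by
    ext k
    by_cases hk : phi n j k = e
    · have h0 : k ≠ 0 := by rintro rfl; exact phi_ne_of_dvd hn he hen (dvd_zero _) hk
      have hn' : k ≠ n := by rintro rfl; exact phi_ne_of_dvd hn he hen dvd_rfl hk
      simp only [W, S, mem_union, Finset.mem_neg', mem_filter, mem_Ico, mem_Icc, phi_neg hn, hk,
        and_true]
      omega
    · simp [W, S, Finset.mem_neg', phi_neg hn, hk]
  have hdisj_sym : Disjoint (-S) S := by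
    rw [disjoint_left]
    intro k hk hk'
    simp only [S, Finset.mem_neg', mem_filter, mem_Icc] at hk hk'
    omega
  have hsplit : {k ∈ W | phi n j k = e}
      = {k ∈ W | j * k ≡ e [ZMOD 2 * n]} ∪ {k ∈ W | j * k ≡ -e [ZMOD 2 * n]} := by
    rw [← filter_or]
    exact filter_congr fun k _ => phi_eq_iff hn he.le hen k
  have hdisj_res :
      Disjoint {k ∈ W | j * k ≡ e [ZMOD 2 * n]} {k ∈ W | j * k ≡ -e [ZMOD 2 * n]} := by
    refine disjoint_filter.2 fun k _ h₁ h₂ => he.ne' ?_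
    have := Int.eq_zero_of_abs_lt_dvd (h₁.symm.trans h₂).dvd (by rw [abs_lt]; omega)
    omega
  have hcount := congrArg card (hsym.symm.trans hsplit)
  rw [card_union_of_disjoint hdisj_sym, card_union_of_disjoint hdisj_res, card_neg,
    Int.card_filter_Ico_mul_modEq_eq_gcd _ (by omega) (by rwa [hgcd]),
    Int.card_filter_Ico_mul_modEq_eq_gcd _ (by omega) (by rwa [hgcd, dvd_neg]), hgcd] at hcount
  omega

theorem phi_image_Icc_diff (hn : 0 < n) :
    phi n j '' Set.Icc 1 ((n : ℤ) - 1) \ {0, (n : ℤ)}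
      = {y : ℤ | 0 < y ∧ y < n ∧ (Nat.gcd j (2 * n) : ℤ) ∣ y} := by
  ext y
  simp only [Set.mem_sdiff, Set.mem_image, Set.mem_insert_iff, Set.mem_singleton_iff, not_or,
    Set.mem_ofPred_eq]
  constructor
  · rintro ⟨⟨k, -, rfl⟩, h0, hn'⟩
    exact ⟨(phi_nonneg k).lt_of_ne' h0, (phi_le hn k).lt_of_ne hn',
      natCast_dvd_phi hn (Nat.gcd_dvd_left _ _) (Nat.gcd_dvd_right _ _) k⟩
  · rintro ⟨h0, hn', hd⟩
    obtain ⟨k, hk⟩ : ({k ∈ Icc 1 ((n : ℤ) - 1) | phi n j k = y}).Nonempty := by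
      rw [← card_pos, card_filter_phi_eq hn h0 hn' hd]
      exact Nat.gcd_pos_of_pos_right j (by omega)
    rw [mem_filter, mem_Icc] at hk
    exact ⟨⟨k, hk.1, hk.2⟩, h0.ne', hn'.ne⟩

end phi

theorem one_le_and_le_div_sub_one_iff {d n m : ℕ} (hd : 0 < d) (hdn : d ∣ n) :
    1 ≤ m ∧ m ≤ n / d - 1 ↔ 0 < (d : ℤ) * m ∧ (d : ℤ) * m < n := by
  rw [show (1 ≤ m ∧ m ≤ n / d - 1 ↔ 0 < m ∧ m < n / d) by omega, Nat.lt_div_iff_mul_lt' hdn]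
  norm_cast
  rw [Nat.mul_pos_iff_of_pos_left hd]

theorem phi_image_and_card_odd_case_general (n j d : ℕ) (hn : 1 ≤ n)
    (hgcd : Nat.gcd j n = d) (hgcd2 : Nat.gcd j (2 * n) = d) :
    (∀ m : ℕ, 1 ≤ m → m ≤ n / d - 1 →
      ((Finset.Icc (1 : ℤ) ((n : ℤ) - 1)).filter
        (fun k => phi n j k = (d : ℤ) * (m : ℤ))).card = d) ∧
    (phi n j '' Set.Icc (1 : ℤ) ((n : ℤ) - 1)) \ {0, (n : ℤ)} =
      {y : ℤ | ∃ m : ℕ, 1 ≤ m ∧ m ≤ n / d - 1 ∧ y = (d : ℤ) * (m : ℤ)} := by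
  have hdn : d ∣ n := hgcd ▸ Nat.gcd_dvd_right j n
  have hd : 0 < d := hgcd2 ▸ Nat.gcd_pos_of_pos_right j (by omega)
  have hrange := fun m => one_le_and_le_div_sub_one_iff (m := m) hd hdn
  subst hgcd2
  refine ⟨fun m hm₁ hm₂ => ?_, ?_⟩
  · obtain ⟨he, hen⟩ := (hrange m).1 ⟨hm₁, hm₂⟩
    exact card_filter_phi_eq hn he hen (dvd_mul_right _ _)
  · rw [phi_image_Icc_diff hn]
    ext y
    simp only [Set.mem_ofPred_eq]
    constructor
    · rintro ⟨h0, hn', t, rfl⟩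
      lift t to ℕ using (pos_of_mul_pos_right h0 (by positivity)).le
      obtain ⟨hm₁, hm₂⟩ := (hrange t).2 ⟨h0, hn'⟩
      exact ⟨t, hm₁, hm₂, rfl⟩
    · rintro ⟨m, hm₁, hm₂, rfl⟩
      obtain ⟨h0, hn'⟩ := (hrange m).1 ⟨hm₁, hm₂⟩
      exact ⟨h0, hn', dvd_mul_right _ _⟩

theorem phi_image_and_card_odd_case (n j d : ℕ) (hn : 1 ≤ n) (hj : 1 ≤ j)
    (hgcd : Nat.gcd j n = d) (hgcd2 : Nat.gcd j (2 * n) = d) (hdn : d < n) :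
    (∀ m : ℕ, 1 ≤ m → m ≤ n / d - 1 →
      ((Finset.Icc (1 : ℤ) ((n : ℤ) - 1)).filter
        (fun k => phi n j k = (d : ℤ) * (m : ℤ))).card = d) ∧
    (phi n j '' Set.Icc (1 : ℤ) ((n : ℤ) - 1)) \ {0, (n : ℤ)} =
      {y : ℤ | ∃ m : ℕ, 1 ≤ m ∧ m ≤ n / d - 1 ∧ y = (d : ℤ) * (m : ℤ)} :=
  phi_image_and_card_odd_case_general n j d hn hgcd hgcd2
end

section
/- Let n ≥ 1 and 1 ≤ j ≤ n with gcd(2j−1, n) = d. Then the modified entropy Ŝ_{n,j} := Σ_{i=1}^{n−1} cos²((2j−1)πi/(2n)) log(cos²((2j−1)πi/(2n))) equals 0 if j = (n+1)/2 (i.e. d = n), and otherwise equals d · Σ_{k=1}^{n/d − 1} cos²(πdk/(2n)) log(cos²(πdk/(2n))). -/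
/-!
Put `g x = cos² (πx/2n) log cos² (πx/2n)`, which is even, `2n`-periodic and vanishes at `0` and
at `n`. For odd `m`, evenness and periodicity fold the full-period sum `∑_{i<2n} g(mi)` onto twice
the sum over `1 ≤ i ≤ n-1` (the two remaining terms `g 0` and `g (mn)` vanish). With
`m = dm'` and `n = de`, the full-period sum consists of `d` blocks of length `2e`, and in each
of them `i ↦ m'i` permutes the residues mod `2e` since `m'` is coprime to `2e`; so it equals
`d ∑_{i<2e} g(di)`, which folds the same way onto twice `d ∑_{1 ≤ k ≤ e-1} g(dk)`.
-/

open Real Finset Function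

section PeriodicSums

variable {M : Type*} [AddCommMonoid M] {F : ℕ → M} {p : ℕ}

theorem Function.Periodic.sum_range_mul_period (hF : Periodic F p) (k : ℕ) :
    ∑ i ∈ range (k * p), F i = k • ∑ i ∈ range p, F i := by
  induction k with
  | zero => simp
  | succ k ih =>
    rw [Nat.succ_mul, sum_range_add, ih, succ_nsmul]
    congr 1
    exact sum_congr rfl fun i _ => by rw [add_comm]; exact hF.nat_mul k i

theorem Function.Periodic.sum_range_comp_mul_of_coprime (hF : Periodic F p) {c : ℕ}
    (hc : c.Coprime p) : ∑ i ∈ range p, F (c * i) = ∑ i ∈ range p, F i := by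
  rcases p.eq_zero_or_pos with rfl | hp
  · simp
  have hinj : Set.InjOn (fun i => c * i % p) (range p) := fun x hx y hy hxy => by
    have hxy' : x ≡ y [MOD p] := Nat.ModEq.cancel_left_of_coprime (by simpa using hc.symm) hxy
    rwa [Nat.ModEq, Nat.mod_eq_of_lt (mem_range.1 hx), Nat.mod_eq_of_lt (mem_range.1 hy)] at hxy'
  have himage : (range p).image (fun i => c * i % p) = range p :=
    eq_of_subset_of_card_le (image_subset_iff.2 fun i _ => mem_range.2 (Nat.mod_lt _ hp))
      (card_image_of_injOn hinj).ge
  calc ∑ i ∈ range p, F (c * i) = ∑ i ∈ range p, F (c * i % p) := by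
        simp only [hF.map_mod_nat]
    _ = ∑ i ∈ range p, F i := by rw [← sum_image hinj, himage]

end PeriodicSums

theorem sum_range_two_mul_comp_mul_eq_two_nsmul {R M : Type*} [Ring R] [AddCommMonoid M]
    {g : R → M} (a e : ℕ) (hper : Periodic g (a * (2 * e))) (heven : g.Even)
    (h0 : g 0 = 0) (he : g (a * e) = 0) :
    ∑ i ∈ range (2 * e), g (a * i) = 2 • ∑ i ∈ Icc 1 (e - 1), g (a * i) := by
  rcases e.eq_zero_or_pos with rfl | he1
  · simp
  have hreflect : ∀ i ∈ Ico 1 e, g (a * (2 * e - i : ℕ)) = g (a * i) := fun i hi => by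
    rw [Nat.cast_sub (by simp at hi; omega), Nat.cast_mul, Nat.cast_ofNat, mul_sub, hper.sub_eq',
      heven]
  have hIcc : Icc 1 (e - 1) = Ico 1 e := by ext; simp; omega
  rw [hIcc, ← sum_range_add_sum_Ico _ (by omega : e + 1 ≤ 2 * e), sum_range_succ,
    ← sum_range_add_sum_Ico _ (by omega : 1 ≤ e)]
  have hupper : ∑ i ∈ Ico (e + 1) (2 * e), g (a * i) = ∑ i ∈ Ico 1 e, g (a * i) := by
    rw [← sum_congr rfl hreflect,
      sum_Ico_reflect (fun i => g (a * i)) 1 (by omega : e ≤ 2 * e + 1)]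
    congr 2; omega
  rw [hupper, he, sum_range_one, Nat.cast_zero, mul_zero, h0, two_nsmul]
  abel

theorem sum_Icc_comp_odd_mul_eq_gcd_nsmul {R M : Type*} [CommRing R] [AddCommMonoid M]
    [IsAddTorsionFree M] {g : R → M} {n m d : ℕ} (hper : Periodic g (2 * n)) (heven : g.Even)
    (h0 : g 0 = 0) (hn : g n = 0) (hm : Odd m) (hd : m.gcd n = d) :
    ∑ i ∈ Icc 1 (n - 1), g (m * i) = d • ∑ k ∈ Icc 1 (n / d - 1), g (d * k) := by
  have hd0 : 0 < d := hd ▸ Nat.gcd_pos_of_pos_left n hm.pos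
  have hmn : g (m * n) = 0 := by
    obtain ⟨s, rfl⟩ := hm
    rw [← hn, ← hper.nat_mul s n]
    push_cast; ring_nf
  have hA : ∑ i ∈ range (2 * n), g (m * i) = 2 • ∑ i ∈ Icc 1 (n - 1), g (m * i) :=
    sum_range_two_mul_comp_mul_eq_two_nsmul m n (by simpa [mul_left_comm] using hper.nat_mul m)
      heven h0 hmn
  obtain ⟨m', rfl⟩ : d ∣ m := hd ▸ Nat.gcd_dvd_left m n
  obtain ⟨e, rfl⟩ : d ∣ n := hd ▸ Nat.gcd_dvd_right _ n
  have hcop : m'.Coprime (2 * e) := by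
    refine Nat.Coprime.mul_right (Nat.coprime_two_right.2 (hm.of_dvd_nat (dvd_mul_left m' d))) ?_
    rw [Nat.gcd_mul_left] at hd
    exact (Nat.mul_eq_left hd0.ne').1 hd
  have hdper : Periodic (fun i : ℕ => g (d * i)) (2 * e) := fun i => by
    simp only [← hper (d * i)]; push_cast; ring_nf
  have hB : ∑ i ∈ range (2 * (d * e)), g ((d * m' : ℕ) * i) =
      d • ∑ i ∈ range (2 * e), g (d * i) := by
    have hdm'per : Periodic (fun i : ℕ => g (d * (m' * i : ℕ))) (2 * e) := fun i => by
      simpa [mul_add] using hdper.nat_mul m' (m' * i)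
    rw [← hdper.sum_range_comp_mul_of_coprime hcop, ← hdm'per.sum_range_mul_period,
      mul_left_comm]
    push_cast; simp only [mul_assoc]
  have hC : ∑ i ∈ range (2 * e), g (d * i) = 2 • ∑ k ∈ Icc 1 (e - 1), g (d * k) :=
    sum_range_two_mul_comp_mul_eq_two_nsmul d e (by convert hper using 1; push_cast; ring) heven h0
      (by exact_mod_cast hn)
  rw [Nat.mul_div_cancel_left e hd0]
  apply nsmul_right_injective two_ne_zero
  simp only
  rw [← hA, hB, hC, smul_comm]

noncomputable def entropyTerm (n : ℕ) (x : ℝ) : ℝ :=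
  cos (π * x / (2 * n)) ^ 2 * log (cos (π * x / (2 * n)) ^ 2)

theorem entropyTerm_periodic (n : ℕ) : Periodic (entropyTerm n) (2 * n) := fun x => by
  rcases eq_or_ne n 0 with rfl | hn
  · simp
  have harg : π * (x + 2 * n) / (2 * n) = π * x / (2 * n) + π := by field_simp
  rw [entropyTerm, harg, cos_add_pi, neg_sq, entropyTerm]

theorem entropyTerm_even (n : ℕ) : (entropyTerm n).Even := fun x => by
  simp only [entropyTerm, mul_neg, neg_div, cos_neg]

theorem entropyTerm_zero (n : ℕ) : entropyTerm n 0 = 0 := by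
  simp [entropyTerm]

theorem entropyTerm_self (n : ℕ) : entropyTerm n n = 0 := by
  rcases eq_or_ne n 0 with rfl | hn
  · simp [entropyTerm]
  have harg : π * n / (2 * n) = π / 2 := by field_simp
  simp [entropyTerm, harg]

theorem modified_entropy_formula_general (n j d : ℕ) (hj1 : 1 ≤ j)
    (hd : Nat.gcd (2 * j - 1) n = d) :
    (2 * j = n + 1 →
      ∑ i ∈ Finset.Icc 1 (n - 1),
        (Real.cos ((2 * (j : ℝ) - 1) * π * i / (2 * n)))^2 *
          Real.log ((Real.cos ((2 * (j : ℝ) - 1) * π * i / (2 * n)))^2) = 0) ∧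
    (2 * j ≠ n + 1 →
      ∑ i ∈ Finset.Icc 1 (n - 1),
        (Real.cos ((2 * (j : ℝ) - 1) * π * i / (2 * n)))^2 *
          Real.log ((Real.cos ((2 * (j : ℝ) - 1) * π * i / (2 * n)))^2) =
        (d : ℝ) * ∑ k ∈ Finset.Icc 1 (n / d - 1),
          (Real.cos (π * d * k / (2 * n)))^2 *
            Real.log ((Real.cos (π * d * k / (2 * n)))^2)) := by
  have hodd : Odd (2 * j - 1) := ⟨j - 1, by omega⟩
  have hcast : ((2 * j - 1 : ℕ) : ℝ) = 2 * j - 1 := by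
    rw [Nat.cast_sub (by omega)]; push_cast; ring
  have hsum := sum_Icc_comp_odd_mul_eq_gcd_nsmul (entropyTerm_periodic n) (entropyTerm_even n)
    (entropyTerm_zero n) (entropyTerm_self n) hodd hd
  simp only [entropyTerm, hcast, nsmul_eq_mul, mul_left_comm π (2 * (j : ℝ) - 1), ← mul_assoc]
    at hsum
  refine ⟨fun h => ?_, fun _ => hsum⟩
  have hdn : d = n := by rw [← hd, show 2 * j - 1 = n by omega, Nat.gcd_self]
  rw [hsum, hdn, Nat.div_self (by omega)]
  simp

theorem modified_entropy_formula (n j d : ℕ) (hn : 1 ≤ n) (hj1 : 1 ≤ j) (hjn : j ≤ n)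
    (hd : Nat.gcd (2 * j - 1) n = d) :
    (2 * j = n + 1 →
      ∑ i ∈ Finset.Icc 1 (n - 1),
        (Real.cos ((2 * (j : ℝ) - 1) * π * i / (2 * n)))^2 *
          Real.log ((Real.cos ((2 * (j : ℝ) - 1) * π * i / (2 * n)))^2) = 0) ∧
    (2 * j ≠ n + 1 →
      ∑ i ∈ Finset.Icc 1 (n - 1),
        (Real.cos ((2 * (j : ℝ) - 1) * π * i / (2 * n)))^2 *
          Real.log ((Real.cos ((2 * (j : ℝ) - 1) * π * i / (2 * n)))^2) =
        (d : ℝ) * ∑ k ∈ Finset.Icc 1 (n / d - 1),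
          (Real.cos (π * d * k / (2 * n)))^2 *
            Real.log ((Real.cos (π * d * k / (2 * n)))^2)) :=
  modified_entropy_formula_general n j d hj1 hd
end
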